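/- arXiv:1012.1946 — 3 statements merged into one kernel-verified Lean document; each statement's English description precedes it below -/
import Mathlib

section
/- Every tight Euclidean 6-design (X, w) in ℝ² supported by two concentric spheres of radii r_1 ≠ r_2 (both positive) coincides, after applying a suitable orthogonal transformation of ℝ², with Bajnok's configuration X = {b_{kj} = (r_k cos((2j+k)π/5), r_k sin((2j+k)π/5)) : 1 ≤ j ≤ 5, k = 1, 2}, and its weight satisfies w(b_{kj}) = c·r_k^{−5} for some constant c > 0. -/
/-!
Identify `ℝ²` with `ℂ` via `toComplex`. Circle averages of `z ^ m * |z| ^ (2 b)` vanish for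
`m ≥ 1` (rotate by `π / m`), so a 6-design annihilates these moments; using `b = 0, 1` and
`r₁ ≠ r₂`, each shell `Xₖ` has `∑ w z ^ m = 0` for `1 ≤ m ≤ 4`, and the fifth moments of the two
shells cancel. For unit-modulus points with vanishing moments up to `N`,
`∑ w |P(ζ)|² = W ∑ |coeff P|²` whenever `deg P ≤ N`. Taking for `P` the polynomial vanishing on a
shell gives `|Xₖ| ≥ 5`, hence `|Xₖ| = 5` as `|X| = C(5, 3) = 10`; taking the kernels
`∑_{a ≤ 4} (conj ζ_y z) ^ a` forces equal weights on each shell and a common fifth power `vₖ` of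
its points. The cancellation `W₁ v₁ + W₂ v₂ = 0` then gives `r₁⁵ W₁ = r₂⁵ W₂` and
`v₂ / r₂⁵ = - v₁ / r₁⁵`, which after a rotation is Bajnok's pair of pentagons.
-/

open MeasureTheory Metric Finset
open scoped Classical RealInnerProductSpace

noncomputable section

/-- Euclidean `n`-space `ℝⁿ`. -/
abbrev Euc (n : ℕ) := EuclideanSpace ℝ (Fin n)

/-- Evaluation of a multivariate polynomial at a point of `ℝⁿ`. -/
def evalPt {n : ℕ} (x : Euc n) (p : MvPolynomial (Fin n) ℝ) : ℝ :=
  MvPolynomial.eval (fun i => x i) p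

/-- The normalized average (with respect to the `O(n)`-invariant surface measure,
i.e. the `(n-1)`-dimensional Hausdorff measure) of `f` over the sphere of radius `r`
centered at the origin; for `r = 0` it is `f 0`. -/
def sphAvg (n : ℕ) (r : ℝ) (f : Euc n → ℝ) : ℝ :=
  if r = 0 then f 0
  else ⨍ y in Metric.sphere (0 : Euc n) r, f y ∂(μH[(n : ℝ) - 1])

/-- `(X, w)` is a Euclidean `t`-design in `ℝⁿ`:
`∑ᵢ (w(Xᵢ)/|Sᵢ|) ∫_{Sᵢ} f dσᵢ = ∑_{x ∈ X} w(x) f(x)` for all polynomials `f` of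
degree at most `t`, where the `Sᵢ` are the concentric spheres supporting `X`. -/
def IsEuclideanDesign (n t : ℕ) (X : Finset (Euc n)) (w : Euc n → ℝ) : Prop :=
  ∀ p : MvPolynomial (Fin n) ℝ, p.totalDegree ≤ t →
    ∑ r ∈ X.image (fun x => ‖x‖),
        (∑ x ∈ X.filter (fun x => ‖x‖ = r), w x) * sphAvg n r (fun y => evalPt y p)
      = ∑ x ∈ X, w x * evalPt x p

/-- Restriction of polynomials to a subset `S ⊆ ℝⁿ`, as a linear map. -/
def polyRestrict (n : ℕ) (S : Set (Euc n)) :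
    MvPolynomial (Fin n) ℝ →ₗ[ℝ] (S → ℝ) where
  toFun p := fun x => evalPt (x : Euc n) p
  map_add' p q := by funext x; simp [evalPt]
  map_smul' c p := by funext x; simp [evalPt, MvPolynomial.smul_eval]

/-- `Pol_e(S)`: the space of restrictions to `S` of polynomials of total degree at most `e`. -/
def PolOn (n e : ℕ) (S : Set (Euc n)) : Submodule ℝ (S → ℝ) :=
  (MvPolynomial.restrictTotalDegree (Fin n) ℝ e).map (polyRestrict n S)

/-- `dim Pol_e(S)`. -/
def dimPolOn (n e : ℕ) (S : Set (Euc n)) : ℕ := Module.finrank ℝ (PolOn n e S)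

/-- The union of the concentric spheres (centered at the origin) supporting `X`. -/
def suppSpheres (n : ℕ) (X : Finset (Euc n)) : Set (Euc n) :=
  ⋃ r ∈ X.image (fun x => ‖x‖), Metric.sphere (0 : Euc n) r

/-- `(X, w)` is a tight Euclidean `2e`-design on `S` (the union of the concentric
spheres supporting `X`): it is a Euclidean `2e`-design with `|X| = dim Pol_e(S)`. -/
def IsTightOnS (n e : ℕ) (X : Finset (Euc n)) (w : Euc n → ℝ) : Prop :=
  IsEuclideanDesign n (2 * e) X w ∧ X.card = dimPolOn n e (suppSpheres n X)

/-- `(X, w)` is a tight Euclidean `2e`-design: tight on `S` and moreover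
`dim Pol_e(S) = dim Pol_e(ℝⁿ) = C(n+e, e)`. -/
def IsTightDesign (n e : ℕ) (X : Finset (Euc n)) (w : Euc n → ℝ) : Prop :=
  IsTightOnS n e X w ∧ dimPolOn n e (suppSpheres n X) = (n + e).choose e

/-- The point `b_{kj} = (r cos((2j+k)π/5), r sin((2j+k)π/5))` of Bajnok's configuration. -/
def bajnokPt (r : ℝ) (k j : ℕ) : Euc 2 :=
  (WithLp.equiv 2 (Fin 2 → ℝ)).symm
    ![r * Real.cos ((2 * j + k) * Real.pi / 5), r * Real.sin ((2 * j + k) * Real.pi / 5)]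

open Complex

theorem integral_sphere_comp_linearIsometryEquiv {E F : Type*} [NormedAddCommGroup E]
    [NormedSpace ℝ E] [MeasurableSpace E] [BorelSpace E] [NormedAddCommGroup F]
    [NormedSpace ℝ F] (g : E ≃ₗᵢ[ℝ] E) (d r : ℝ) (f : E → F) :
    ∫ y in sphere (0 : E) r, f (g y) ∂μH[d] = ∫ y in sphere (0 : E) r, f y ∂μH[d] := by
  have hpre : g ⁻¹' sphere 0 r = sphere 0 r := by
    ext y
    simp
  have hg := (g.toIsometryEquiv.measurePreserving_hausdorffMeasure d).restrict_preimage
    (isClosed_sphere (x := (0 : E)) (ε := r)).measurableSet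
  rw [show ⇑g.toIsometryEquiv = ⇑g from rfl, hpre] at hg
  exact hg.integral_comp g.toHomeomorph.measurableEmbedding f

theorem sphAvg_eq_zero_of_comp_eq_neg {n : ℕ} (g : Euc n ≃ₗᵢ[ℝ] Euc n) (r : ℝ)
    {f : Euc n → ℝ} (hf : ∀ y, f (g y) = -f y) : sphAvg n r f = 0 := by
  unfold sphAvg
  split_ifs
  · have h0 := hf 0
    rw [map_zero] at h0
    linarith
  · have h := integral_sphere_comp_linearIsometryEquiv g ((n : ℝ) - 1) r f
    simp only [hf, integral_neg] at h
    rw [setAverage_eq, show ∫ y in sphere 0 r, f y ∂μH[(n : ℝ) - 1] = 0 by linarith, smul_zero]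

namespace MvPolynomial

variable {σ : Type*}

def mapLinear (ℓ : ℂ →ₗ[ℝ] ℝ) (q : MvPolynomial σ ℂ) : MvPolynomial σ ℝ :=
  ∑ s ∈ q.support, monomial s (ℓ (q.coeff s))

theorem eval_mapLinear (ℓ : ℂ →ₗ[ℝ] ℝ) (q : MvPolynomial σ ℂ) (x : σ → ℝ) :
    eval x (q.mapLinear ℓ) = ℓ (eval (fun i => (x i : ℂ)) q) := by
  conv_rhs => rw [q.as_sum]
  simp only [mapLinear, map_sum, eval_monomial]
  refine Finset.sum_congr rfl fun s _ => ?_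
  rw [Finsupp.prod, Finsupp.prod, mul_comm, ← smul_eq_mul, ← ℓ.map_smul, Complex.real_smul,
    mul_comm]
  push_cast
  rfl

theorem totalDegree_mapLinear_le (ℓ : ℂ →ₗ[ℝ] ℝ) (q : MvPolynomial σ ℂ) :
    (q.mapLinear ℓ).totalDegree ≤ q.totalDegree :=
  (totalDegree_finsetSum _ _).trans <| Finset.sup_le fun _ hs =>
    (totalDegree_monomial_le _ _).trans (le_totalDegree hs)

end MvPolynomial

def evalComplex {n : ℕ} (x : Euc n) (q : MvPolynomial (Fin n) ℂ) : ℂ :=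
  MvPolynomial.eval (fun i => (x i : ℂ)) q

theorem IsEuclideanDesign.sum_mul_evalComplex_eq_zero {n t : ℕ} {X : Finset (Euc n)}
    {w : Euc n → ℝ} (hd : IsEuclideanDesign n t X w) {q : MvPolynomial (Fin n) ℂ}
    (hq : q.totalDegree ≤ t)
    (havg : ∀ (ℓ : ℂ →ₗ[ℝ] ℝ) (r : ℝ), sphAvg n r (fun y => ℓ (evalComplex y q)) = 0) :
    ∑ x ∈ X, (w x : ℂ) * evalComplex x q = 0 := by
  have hℓ (ℓ : ℂ →ₗ[ℝ] ℝ) : ∑ x ∈ X, w x * ℓ (evalComplex x q) = 0 := by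
    have hev (y : Euc n) : evalPt y (q.mapLinear ℓ) = ℓ (evalComplex y q) :=
      MvPolynomial.eval_mapLinear ℓ q _
    have h := hd (q.mapLinear ℓ) ((q.totalDegree_mapLinear_le ℓ).trans hq)
    simp only [hev, havg, mul_zero, Finset.sum_const_zero] at h
    exact h.symm
  apply Complex.ext
  · simpa [Complex.re_sum] using hℓ Complex.reLm
  · simpa [Complex.im_sum] using hℓ Complex.imLm

def toComplex : Euc 2 ≃ₗᵢ[ℝ] ℂ := Complex.orthonormalBasisOneI.repr.symm

theorem toComplex_apply (x : Euc 2) : toComplex x = x 0 + x 1 * I := by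
  simp [toComplex, mul_comm]

def planeRotation (u : Circle) : Euc 2 ≃ₗᵢ[ℝ] Euc 2 :=
  toComplex.trans ((rotation u).trans toComplex.symm)

theorem toComplex_planeRotation (u : Circle) (x : Euc 2) :
    toComplex (planeRotation u x) = u * toComplex x := by
  simp [planeRotation, rotation_apply]

open MvPolynomial in
def zPowMulNormSqPow (m b : ℕ) : MvPolynomial (Fin 2) ℂ :=
  (X 0 + C I * X 1) ^ m * (X 0 ^ 2 + X 1 ^ 2) ^ b

open MvPolynomial in
theorem totalDegree_zPowMulNormSqPow_le (m b : ℕ) :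
    (zPowMulNormSqPow m b).totalDegree ≤ m + 2 * b := by
  refine IsHomogeneous.totalDegree_le ?_
  unfold zPowMulNormSqPow
  simpa using (((isHomogeneous_X ℂ _).add (isHomogeneous_C_mul_X _ _)).pow m).mul
    (((isHomogeneous_X_pow _ 2).add (isHomogeneous_X_pow _ 2)).pow b)

theorem evalComplex_zPowMulNormSqPow (m b : ℕ) (x : Euc 2) :
    evalComplex x (zPowMulNormSqPow m b) = toComplex x ^ m * (‖x‖ : ℂ) ^ (2 * b) := by
  have hnorm : (‖x‖ : ℂ) ^ 2 = (x 0 : ℂ) ^ 2 + (x 1 : ℂ) ^ 2 := by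
    rw [← ofReal_pow, EuclideanSpace.norm_sq_eq]
    simp [Fin.sum_univ_two]
  simp only [evalComplex, zPowMulNormSqPow, map_mul, map_pow, map_add, MvPolynomial.eval_X,
    MvPolynomial.eval_C]
  rw [pow_mul, hnorm, toComplex_apply]
  ring

theorem IsEuclideanDesign.sum_mul_toComplex_pow_mul_norm_pow_eq_zero {t : ℕ}
    {X : Finset (Euc 2)} {w : Euc 2 → ℝ} (hd : IsEuclideanDesign 2 t X w) {m b : ℕ} (hm : m ≠ 0)
    (hmb : m + 2 * b ≤ t) :
    ∑ x ∈ X, (w x : ℂ) * (toComplex x ^ m * (‖x‖ : ℂ) ^ (2 * b)) = 0 := by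
  -- a rotation by `π / m` turns `toComplex ^ m` into its negative
  set u := Circle.exp (Real.pi / m)
  have hu : (u : ℂ) ^ m = -1 := by
    rw [← Circle.coe_pow, ← Circle.exp_nsmul, nsmul_eq_mul,
      mul_div_cancel₀ _ (by exact_mod_cast hm), Circle.coe_exp, exp_pi_mul_I]
  simp_rw [← evalComplex_zPowMulNormSqPow]
  refine hd.sum_mul_evalComplex_eq_zero ((totalDegree_zPowMulNormSqPow_le m b).trans hmb) fun ℓ r =>
    sphAvg_eq_zero_of_comp_eq_neg (planeRotation u) r fun y => ?_
  rw [evalComplex_zPowMulNormSqPow, evalComplex_zPowMulNormSqPow, toComplex_planeRotation,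
    LinearIsometryEquiv.norm_map, mul_pow, hu]
  simp

section UnitCircle

open ComplexConjugate Polynomial

theorem mul_conj_eq_one_of_norm_eq_one {z : ℂ} (hz : ‖z‖ = 1) : z * conj z = 1 := by
  rw [mul_conj, normSq_eq_norm_sq, hz]
  simp

variable {α : Type*} {Y : Finset α} {ζ : α → ℂ} {w : α → ℝ} {N : ℕ}

theorem sum_mul_pow_mul_conj_pow (hζ : ∀ x ∈ Y, ‖ζ x‖ = 1)
    (hmom : ∀ m, 1 ≤ m → m ≤ N → ∑ x ∈ Y, (w x : ℂ) * ζ x ^ m = 0) {a b : ℕ}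
    (ha : a ≤ N) (hb : b ≤ N) :
    ∑ x ∈ Y, (w x : ℂ) * (ζ x ^ a * conj (ζ x) ^ b) =
      if a = b then ∑ x ∈ Y, (w x : ℂ) else 0 := by
  wlog hba : b ≤ a generalizing a b
  · have h := congrArg conj (this hb ha (by omega))
    simp only [map_sum, map_mul, map_pow, conj_ofReal, conj_conj] at h
    rw [if_neg (by omega), map_zero] at h
    rw [if_neg (by omega), ← h]
    exact Finset.sum_congr rfl fun x _ => by ring
  have hsplit (x) (hx : x ∈ Y) : ζ x ^ a * conj (ζ x) ^ b = ζ x ^ (a - b) := by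
    rw [← Nat.sub_add_cancel hba, pow_add, Nat.add_sub_cancel, mul_assoc, ← mul_pow,
      mul_conj_eq_one_of_norm_eq_one (hζ x hx), one_pow, mul_one]
  rw [Finset.sum_congr rfl fun x hx => by rw [hsplit x hx]]
  rcases hba.eq_or_lt with rfl | hlt
  · simp
  · rw [if_neg hlt.ne', hmom _ (by omega) (by omega)]

theorem sum_mul_normSq_eval (hζ : ∀ x ∈ Y, ‖ζ x‖ = 1)
    (hmom : ∀ m, 1 ≤ m → m ≤ N → ∑ x ∈ Y, (w x : ℂ) * ζ x ^ m = 0) {P : ℂ[X]}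
    (hP : P.natDegree ≤ N) :
    ∑ x ∈ Y, w x * normSq (P.eval (ζ x)) =
      (∑ x ∈ Y, w x) * ∑ a ∈ Finset.range (N + 1), normSq (P.coeff a) := by
  have heval (z : ℂ) : P.eval z = ∑ a ∈ Finset.range (N + 1), P.coeff a * z ^ a :=
    eval_eq_sum_range' (by omega) z
  apply ofReal_injective
  push_cast
  simp_rw [← mul_conj, heval, map_sum, map_mul, map_pow, Finset.sum_mul_sum, Finset.mul_sum]
  calc ∑ x ∈ Y, ∑ a ∈ Finset.range (N + 1), ∑ b ∈ Finset.range (N + 1),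
        (w x : ℂ) * (P.coeff a * ζ x ^ a * (conj (P.coeff b) * conj (ζ x) ^ b))
      = ∑ a ∈ Finset.range (N + 1), ∑ b ∈ Finset.range (N + 1), P.coeff a * conj (P.coeff b) *
          ∑ x ∈ Y, (w x : ℂ) * (ζ x ^ a * conj (ζ x) ^ b) := by
        rw [Finset.sum_comm]
        refine Finset.sum_congr rfl fun a _ => ?_
        rw [Finset.sum_comm]
        simp_rw [Finset.mul_sum]
        exact Finset.sum_congr rfl fun b _ => Finset.sum_congr rfl fun x _ => by ring
    _ = ∑ a ∈ Finset.range (N + 1), P.coeff a * conj (P.coeff a) * ∑ x ∈ Y, (w x : ℂ) := by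
        refine Finset.sum_congr rfl fun a ha => ?_
        rw [Finset.sum_congr rfl fun b hb => by
          rw [sum_mul_pow_mul_conj_pow hζ hmom (Finset.mem_range_succ_iff.mp ha)
            (Finset.mem_range_succ_iff.mp hb)]]
        simp [mul_ite, Finset.sum_ite_eq, ha]
    _ = _ := by
        rw [Finset.sum_comm]
        exact Finset.sum_congr rfl fun a _ => by
          rw [Finset.mul_sum]
          exact Finset.sum_congr rfl fun x _ => by ring

theorem lt_card_of_sum_mul_pow_eq_zero (hζ : ∀ x ∈ Y, ‖ζ x‖ = 1)
    (hmom : ∀ m, 1 ≤ m → m ≤ N → ∑ x ∈ Y, (w x : ℂ) * ζ x ^ m = 0)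
    (hw : ∀ x ∈ Y, 0 < w x) (hY : Y.Nonempty) : N < Y.card := by
  by_contra! hle
  set P : ℂ[X] := ∏ x ∈ Y, (X - C (ζ x))
  have hmonic : P.Monic := monic_prod_of_monic _ _ fun x _ => monic_X_sub_C (ζ x)
  have hdeg : P.natDegree = Y.card := by
    rw [natDegree_prod_of_monic _ _ fun x _ => monic_X_sub_C (ζ x)]
    simp
  have h := sum_mul_normSq_eval hζ hmom (hdeg.trans_le hle)
  have hvanish : ∑ x ∈ Y, w x * normSq (P.eval (ζ x)) = 0 :=
    Finset.sum_eq_zero fun x hx => by simp [P, eval_prod, Finset.prod_eq_zero hx]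
  have hlead : 1 ≤ ∑ a ∈ Finset.range (N + 1), normSq (P.coeff a) := by
    calc (1 : ℝ) = normSq (P.coeff Y.card) := by rw [← hdeg, hmonic.coeff_natDegree, map_one]
      _ ≤ _ := Finset.single_le_sum (fun a _ => normSq_nonneg _) (by simp; omega)
  have hW : 0 < ∑ x ∈ Y, w x := Finset.sum_pos hw hY
  nlinarith

theorem sq_mul_add_sum_erase_eq (hζ : ∀ x ∈ Y, ‖ζ x‖ = 1)
    (hmom : ∀ m, 1 ≤ m → m ≤ N → ∑ x ∈ Y, (w x : ℂ) * ζ x ^ m = 0) {y : α} (hy : y ∈ Y) :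
    ((N : ℝ) + 1) ^ 2 * w y +
        ∑ x ∈ Y.erase y, w x * normSq (∑ a ∈ Finset.range (N + 1), (conj (ζ y) * ζ x) ^ a) =
      (N + 1) * ∑ x ∈ Y, w x := by
  set Q : ℂ[X] := ∑ a ∈ Finset.range (N + 1), C (conj (ζ y) ^ a) * X ^ a
  have hQdeg : Q.natDegree ≤ N := by
    refine natDegree_sum_le_of_forall_le _ _ fun a ha => (natDegree_C_mul_X_pow_le _ _).trans ?_
    exact Finset.mem_range_succ_iff.mp ha
  have hQeval (z : ℂ) : Q.eval z = ∑ a ∈ Finset.range (N + 1), (conj (ζ y) * z) ^ a := by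
    simp [Q, eval_finsetSum, mul_pow]
  have hQcoeff : ∀ a ∈ Finset.range (N + 1), normSq (Q.coeff a) = 1 := by
    intro a ha
    simp only [Q, finsetSum_coeff, coeff_C_mul_X_pow]
    rw [Finset.sum_ite_eq, if_pos ha, map_pow, normSq_conj, normSq_eq_norm_sq, hζ y hy]
    simp
  have hyy : conj (ζ y) * ζ y = 1 := by
    rw [mul_comm, mul_conj_eq_one_of_norm_eq_one (hζ y hy)]
  have h := sum_mul_normSq_eval hζ hmom hQdeg
  rw [Finset.sum_congr rfl hQcoeff, ← Finset.add_sum_erase _ _ hy, hQeval, hyy] at h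
  simp only [hQeval, one_pow, Finset.sum_const, Finset.card_range, nsmul_eq_mul, mul_one] at h
  rw [normSq_natCast] at h
  push_cast at h
  linarith

theorem weight_eq_and_pow_eq_of_card_eq (hζ : ∀ x ∈ Y, ‖ζ x‖ = 1)
    (hmom : ∀ m, 1 ≤ m → m ≤ N → ∑ x ∈ Y, (w x : ℂ) * ζ x ^ m = 0)
    (hw : ∀ x ∈ Y, 0 < w x) (hcard : Y.card = N + 1) {y : α} (hy : y ∈ Y) :
    w y = (∑ x ∈ Y, w x) / (N + 1) ∧ ∀ x ∈ Y, ζ x ^ (N + 1) = ζ y ^ (N + 1) := by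
  set D : α → ℝ := fun y =>
    ∑ x ∈ Y.erase y, w x * normSq (∑ a ∈ Finset.range (N + 1), (conj (ζ y) * ζ x) ^ a)
  have hD_nonneg (y : α) : 0 ≤ D y :=
    Finset.sum_nonneg fun x hx =>
      mul_nonneg (hw x (Finset.mem_of_mem_erase hx)).le (normSq_nonneg _)
  -- summed over `y`, the identities `(N + 1)² w y + D y = (N + 1) W` add up to `∑ D = 0`
  have hsum : ∑ y ∈ Y, D y = 0 := by
    have h := Finset.sum_congr rfl fun y hy => sq_mul_add_sum_erase_eq hζ hmom (w := w) hy
    rw [Finset.sum_add_distrib, ← Finset.mul_sum, Finset.sum_const, hcard, nsmul_eq_mul] at h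
    push_cast at h
    linarith
  have hD : D y = 0 := (Finset.sum_eq_zero_iff_of_nonneg fun y _ => hD_nonneg y).mp hsum y hy
  have hid := sq_mul_add_sum_erase_eq hζ hmom (w := w) hy
  have hwy : w y = (∑ x ∈ Y, w x) / (N + 1) := by
    rw [eq_div_iff (by positivity)]
    nlinarith
  refine ⟨hwy, fun x hx => ?_⟩
  rcases eq_or_ne x y with rfl | hxy
  · rfl
  have hgeom : ∑ a ∈ Finset.range (N + 1), (conj (ζ y) * ζ x) ^ a = 0 := by
    have h := (Finset.sum_eq_zero_iff_of_nonneg fun x hx =>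
      mul_nonneg (hw x (Finset.mem_of_mem_erase hx)).le (normSq_nonneg _)).mp hD x
      (Finset.mem_erase.mpr ⟨hxy, hx⟩)
    exact normSq_eq_zero.mp ((mul_eq_zero.mp h).resolve_left (hw x hx).ne')
  have hroot : (conj (ζ y) * ζ x) ^ (N + 1) = 1 := by
    have h := geom_sum_mul (conj (ζ y) * ζ x) (N + 1)
    rw [hgeom, zero_mul] at h
    linear_combination -h
  calc ζ x ^ (N + 1) = (ζ y * conj (ζ y)) ^ (N + 1) * ζ x ^ (N + 1) := by
        rw [mul_conj_eq_one_of_norm_eq_one (hζ y hy), one_pow, one_mul]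
    _ = ζ y ^ (N + 1) * (conj (ζ y) * ζ x) ^ (N + 1) := by ring
    _ = ζ y ^ (N + 1) := by rw [hroot, mul_one]

end UnitCircle

theorem Polynomial.eq_nthRootsFinset_of_card_eq {K : Type*} [CommRing K] [IsDomain K]
    {s : Finset K} {n : ℕ} {c : K} (hcard : s.card = n) (hs : ∀ z ∈ s, z ^ n = c) :
    s = nthRootsFinset n c := by
  rcases Nat.eq_zero_or_pos n with rfl | hn
  · rw [nthRootsFinset_zero, ← Finset.card_eq_zero, hcard]
  refine Finset.eq_of_subset_of_card_le (fun z hz => (mem_nthRootsFinset hn c).mpr (hs z hz)) ?_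
  rw [hcard, nthRootsFinset_def]
  exact (Multiset.toFinset_card_le _).trans (card_nthRoots n c)

def tenthRoot : ℂ := exp (2 * Real.pi * I / 10)

theorem isPrimitiveRoot_tenthRoot : IsPrimitiveRoot tenthRoot 10 := by
  simpa [tenthRoot] using isPrimitiveRoot_exp 10 (by norm_num)

theorem tenthRoot_pow_five : tenthRoot ^ 5 = -1 := by
  rw [tenthRoot, ← exp_nat_mul, ← exp_pi_mul_I]
  ring_nf

theorem toComplex_bajnokPt (ρ : ℝ) (k j : ℕ) :
    toComplex (bajnokPt ρ k j) = ρ * tenthRoot ^ (2 * j + k) := by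
  rw [toComplex_apply, tenthRoot, ← exp_nat_mul,
    show ((2 * j + k : ℕ) : ℂ) * (2 * Real.pi * I / 10) = ((2 * j + k) * Real.pi / 5 : ℝ) * I by
      push_cast; ring,
    exp_mul_I, ← ofReal_cos, ← ofReal_sin]
  simp only [bajnokPt, WithLp.equiv_symm_apply, PiLp.toLp_apply, Matrix.cons_val_zero,
    Matrix.cons_val_one]
  push_cast
  ring

theorem coe_eq_setOf_planeRotation_bajnokPt {Y : Finset (Euc 2)} (hcard : Y.card = 5) {ρ : ℝ}
    (hρ : ρ ≠ 0) (u : Circle) (k : ℕ) (hY : ∀ x ∈ Y, toComplex x ^ 5 = (-1) ^ k * (ρ * u) ^ 5) :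
    (Y : Set (Euc 2)) = {y | ∃ j ∈ Finset.Icc 1 5, y = planeRotation u (bajnokPt ρ k j)} := by
  set B := (Finset.Icc 1 5).image fun j => planeRotation u (bajnokPt ρ k j)
  have hB (j : ℕ) :
      toComplex (planeRotation u (bajnokPt ρ k j)) = ρ * u * tenthRoot ^ (2 * j + k) := by
    rw [toComplex_planeRotation, toComplex_bajnokPt]
    ring
  have hρu : (ρ : ℂ) * u ≠ 0 := mul_ne_zero (ofReal_ne_zero.mpr hρ) (Circle.coe_ne_zero u)
  have hinj : Set.InjOn (fun j => planeRotation u (bajnokPt ρ k j)) (Finset.Icc 1 5 : Set ℕ) := by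
    intro j hj j' hj' h
    have h' := mul_left_cancel₀ hρu ((hB j).symm.trans ((congrArg toComplex h).trans (hB j')))
    rw [(isPrimitiveRoot_tenthRoot.isOfFinOrder (by norm_num)).pow_eq_pow_iff_modEq,
      ← isPrimitiveRoot_tenthRoot.eq_orderOf, Nat.ModEq] at h'
    simp only [Finset.coe_Icc, Set.mem_Icc] at hj hj'
    omega
  have hpow : ∀ z ∈ B.image toComplex, z ^ 5 = (-1) ^ k * (ρ * u) ^ 5 := by
    simp only [B, Finset.image_image, Finset.mem_image]
    rintro _ ⟨j, -, rfl⟩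
    rw [Function.comp_apply, hB, mul_pow, ← pow_mul, mul_comm (2 * j + k), pow_mul,
      tenthRoot_pow_five, pow_add, pow_mul]
    simp [mul_comm]
  have hcardY : (Y.image toComplex).card = 5 := by
    rw [Finset.card_image_of_injective _ toComplex.injective, hcard]
  have hcardB : (B.image toComplex).card = 5 := by
    rw [Finset.card_image_of_injective _ toComplex.injective, Finset.card_image_of_injOn hinj]
    rfl
  have hYB : Y.image toComplex = B.image toComplex :=
    (Polynomial.eq_nthRootsFinset_of_card_eq hcardY (by simpa using hY)).trans
      (Polynomial.eq_nthRootsFinset_of_card_eq hcardB hpow).symm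
  rw [Finset.image_injective toComplex.injective hYB]
  ext y
  simp [B, eq_comm]

def shell {n : ℕ} (X : Finset (Euc n)) (ρ : ℝ) : Finset (Euc n) := X.filter fun x => ‖x‖ = ρ

theorem mem_shell {n : ℕ} {X : Finset (Euc n)} {ρ : ℝ} {x : Euc n} :
    x ∈ shell X ρ ↔ x ∈ X ∧ ‖x‖ = ρ :=
  Finset.mem_filter

theorem shell_nonempty {n : ℕ} {X : Finset (Euc n)} {ρ₁ ρ₂ : ℝ}
    (hsupp : X.image (fun x => ‖x‖) = {ρ₁, ρ₂}) : (shell X ρ₁).Nonempty := by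
  obtain ⟨x, hx, hxρ⟩ := Finset.mem_image.mp (hsupp ▸ Finset.mem_insert_self ρ₁ {ρ₂})
  exact ⟨x, mem_shell.mpr ⟨hx, hxρ⟩⟩

theorem sum_eq_sum_shell_add_sum_shell {n : ℕ} {M : Type*} [AddCommMonoid M]
    {X : Finset (Euc n)} {ρ₁ ρ₂ : ℝ} (hsupp : X.image (fun x => ‖x‖) = {ρ₁, ρ₂}) (hρ : ρ₁ ≠ ρ₂)
    (f : Euc n → M) : ∑ x ∈ X, f x = ∑ x ∈ shell X ρ₁, f x + ∑ x ∈ shell X ρ₂, f x := by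
  rw [← Finset.sum_fiberwise_of_maps_to (g := fun x => ‖x‖) (t := {ρ₁, ρ₂})
    fun x hx => hsupp ▸ Finset.mem_image_of_mem _ hx, Finset.sum_pair hρ]
  rfl

theorem IsEuclideanDesign.sum_shell_mul_toComplex_pow_eq_zero {t : ℕ} {X : Finset (Euc 2)}
    {w : Euc 2 → ℝ} (hd : IsEuclideanDesign 2 t X w) {ρ₁ ρ₂ : ℝ}
    (hsupp : X.image (fun x => ‖x‖) = {ρ₁, ρ₂}) (hρ : ρ₁ ^ 2 ≠ ρ₂ ^ 2) {m : ℕ} (hm : m ≠ 0)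
    (hmt : m + 2 ≤ t) : ∑ x ∈ shell X ρ₁, (w x : ℂ) * toComplex x ^ m = 0 := by
  -- `b = 0, 1` give two equations for the two shell sums, independent as `ρ₁ ^ 2 ≠ ρ₂ ^ 2`
  have h (b : ℕ) (hb : b ≤ 1) : (ρ₁ : ℂ) ^ (2 * b) * ∑ x ∈ shell X ρ₁, (w x : ℂ) * toComplex x ^ m +
      (ρ₂ : ℂ) ^ (2 * b) * ∑ x ∈ shell X ρ₂, (w x : ℂ) * toComplex x ^ m = 0 := by
    have h := hd.sum_mul_toComplex_pow_mul_norm_pow_eq_zero hm (b := b) (by omega)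
    rw [sum_eq_sum_shell_add_sum_shell hsupp (fun h => hρ (by rw [h]))] at h
    rw [Finset.mul_sum, Finset.mul_sum, ← h]
    congr 1 <;> exact Finset.sum_congr rfl fun x hx => by rw [(mem_shell.mp hx).2]; ring
  have h0 := h 0 (by norm_num)
  have h1 := h 1 le_rfl
  simp only [mul_zero, pow_zero, one_mul, mul_one] at h0 h1
  have hρ' : (ρ₁ : ℂ) ^ 2 - (ρ₂ : ℂ) ^ 2 ≠ 0 := by exact_mod_cast sub_ne_zero.mpr hρ
  apply (mul_eq_zero.mp (show ((ρ₁ : ℂ) ^ 2 - (ρ₂ : ℂ) ^ 2) * _ = 0 by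
    linear_combination h1 - (ρ₂ : ℂ) ^ 2 * h0)).resolve_left hρ'

theorem norm_toComplex_div_eq_one {ρ : ℝ} (hρ : 0 < ρ) {x : Euc 2} (hx : ‖x‖ = ρ) :
    ‖toComplex x / ρ‖ = 1 := by
  rw [norm_div, LinearIsometryEquiv.norm_map, hx, norm_real, Real.norm_of_nonneg hρ.le,
    div_self hρ.ne']

theorem coe_eq_shell_union_shell {n : ℕ} {X : Finset (Euc n)} {ρ₁ ρ₂ : ℝ}
    (hsupp : X.image (fun x => ‖x‖) = {ρ₁, ρ₂}) :
    (X : Set (Euc n)) = ↑(shell X ρ₁) ∪ ↑(shell X ρ₂) := by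
  ext x
  have h (hx : x ∈ X) : ‖x‖ = ρ₁ ∨ ‖x‖ = ρ₂ := by
    simpa [hsupp] using Finset.mem_image_of_mem (fun x => ‖x‖) hx
  simp only [Finset.mem_coe, Set.mem_union, mem_shell]
  tauto

section Shell

variable {X : Finset (Euc 2)} {w : Euc 2 → ℝ} {ρ₁ ρ₂ : ℝ}

theorem IsEuclideanDesign.sum_shell_mul_toComplex_div_pow_eq_zero
    (hd : IsEuclideanDesign 2 6 X w) (hsupp : X.image (fun x => ‖x‖) = {ρ₁, ρ₂})
    (hρ : ρ₁ ^ 2 ≠ ρ₂ ^ 2) {m : ℕ} (h1 : 1 ≤ m) (h4 : m ≤ 4) :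
    ∑ x ∈ shell X ρ₁, (w x : ℂ) * (toComplex x / ρ₁) ^ m = 0 := by
  have h : ∑ x ∈ shell X ρ₁, (w x : ℂ) * toComplex x ^ m = 0 :=
    hd.sum_shell_mul_toComplex_pow_eq_zero hsupp hρ (by omega) (by omega)
  simp_rw [div_pow, mul_div_assoc', ← Finset.sum_div, h, zero_div]

theorem five_le_card_shell (hd : IsEuclideanDesign 2 6 X w)
    (hsupp : X.image (fun x => ‖x‖) = {ρ₁, ρ₂}) (hρ₁ : 0 < ρ₁) (hρ : ρ₁ ^ 2 ≠ ρ₂ ^ 2)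
    (hw : ∀ x ∈ X, 0 < w x) : 5 ≤ (shell X ρ₁).card :=
  lt_card_of_sum_mul_pow_eq_zero (ζ := fun x => toComplex x / ρ₁)
    (fun _ hx => norm_toComplex_div_eq_one hρ₁ (mem_shell.mp hx).2)
    (fun _ h1 h4 => hd.sum_shell_mul_toComplex_div_pow_eq_zero hsupp hρ h1 h4)
    (fun x hx => hw x (mem_shell.mp hx).1) (shell_nonempty hsupp)

theorem exists_weight_eq_and_toComplex_pow_eq_shell (hd : IsEuclideanDesign 2 6 X w)
    (hsupp : X.image (fun x => ‖x‖) = {ρ₁, ρ₂}) (hρ₁ : 0 < ρ₁) (hρ : ρ₁ ^ 2 ≠ ρ₂ ^ 2)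
    (hw : ∀ x ∈ X, 0 < w x) (hcard : (shell X ρ₁).card = 5) :
    ∃ v : ℂ, ‖v‖ = ρ₁ ^ 5 ∧
      ∀ x ∈ shell X ρ₁, w x = (∑ y ∈ shell X ρ₁, w y) / 5 ∧ toComplex x ^ 5 = v := by
  obtain ⟨y, hy⟩ := shell_nonempty hsupp
  have hρ₁' : (ρ₁ : ℂ) ^ 5 ≠ 0 := pow_ne_zero _ (ofReal_ne_zero.mpr hρ₁.ne')
  refine ⟨toComplex y ^ 5, by rw [norm_pow, LinearIsometryEquiv.norm_map, (mem_shell.mp hy).2],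
    fun x hx => ?_⟩
  obtain ⟨hwx, hpow⟩ := weight_eq_and_pow_eq_of_card_eq (ζ := fun x => toComplex x / ρ₁) (N := 4)
    (fun _ hx => norm_toComplex_div_eq_one hρ₁ (mem_shell.mp hx).2)
    (fun _ h1 h4 => hd.sum_shell_mul_toComplex_div_pow_eq_zero hsupp hρ h1 h4)
    (fun x hx => hw x (mem_shell.mp hx).1) hcard hx
  refine ⟨by rw [hwx]; norm_num, ?_⟩
  have h := hpow y hy
  simp only [div_pow] at h
  exact ((div_left_inj' hρ₁').mp h).symm

theorem card_shell_eq_five (hd : IsEuclideanDesign 2 6 X w) (hX : X.card = 10)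
    (hsupp : X.image (fun x => ‖x‖) = {ρ₁, ρ₂}) (hρ₁ : 0 < ρ₁) (hρ₂ : 0 < ρ₂) (hρ : ρ₁ ≠ ρ₂)
    (hw : ∀ x ∈ X, 0 < w x) : (shell X ρ₁).card = 5 := by
  have hsq : ρ₁ ^ 2 ≠ ρ₂ ^ 2 := fun h => hρ ((pow_left_inj₀ hρ₁.le hρ₂.le two_ne_zero).mp h)
  have h₁ := five_le_card_shell hd hsupp hρ₁ hsq hw
  have h₂ := five_le_card_shell hd (hsupp.trans (Finset.pair_comm _ _)) hρ₂ hsq.symm hw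
  have h : (shell X ρ₁).card + (shell X ρ₂).card = 10 := by
    rw [Finset.card_eq_sum_ones, Finset.card_eq_sum_ones,
      ← sum_eq_sum_shell_add_sum_shell hsupp hρ, ← Finset.card_eq_sum_ones, hX]
  omega

theorem IsEuclideanDesign.sum_shell_mul_add_sum_shell_mul_eq_zero {t : ℕ}
    (hd : IsEuclideanDesign 2 t X w) (ht : 5 ≤ t) (hsupp : X.image (fun x => ‖x‖) = {ρ₁, ρ₂})
    (hρ : ρ₁ ≠ ρ₂) {v₁ v₂ : ℂ} (hv₁ : ∀ x ∈ shell X ρ₁, toComplex x ^ 5 = v₁)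
    (hv₂ : ∀ x ∈ shell X ρ₂, toComplex x ^ 5 = v₂) :
    ((∑ x ∈ shell X ρ₁, w x : ℝ) : ℂ) * v₁ + ((∑ x ∈ shell X ρ₂, w x : ℝ) : ℂ) * v₂ = 0 := by
  have h := hd.sum_mul_toComplex_pow_mul_norm_pow_eq_zero (m := 5) (b := 0) (by norm_num) (by omega)
  rw [sum_eq_sum_shell_add_sum_shell hsupp hρ] at h
  simp +contextual only [hv₁, hv₂, mul_zero, pow_zero, mul_one] at h
  simpa [Finset.sum_mul] using h

end Shell

theorem exists_circle_of_mul_add_mul_eq_zero {ρ₁ ρ₂ W₁ W₂ : ℝ} (hρ₁ : 0 < ρ₁)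
    (hW₁ : 0 < W₁) (hW₂ : 0 < W₂) {v₁ v₂ : ℂ} (hv₁ : ‖v₁‖ = ρ₁ ^ 5) (hv₂ : ‖v₂‖ = ρ₂ ^ 5)
    (h : W₁ * v₁ + W₂ * v₂ = 0) :
    ρ₁ ^ 5 * W₁ = ρ₂ ^ 5 * W₂ ∧ ∃ u : Circle, v₁ = -(ρ₁ * u) ^ 5 ∧ v₂ = (ρ₂ * u) ^ 5 := by
  have hW : ρ₁ ^ 5 * W₁ = ρ₂ ^ 5 * W₂ := by
    have h' := congrArg norm (eq_neg_of_add_eq_zero_left h)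
    simp only [norm_mul, norm_neg, norm_real, hv₁, hv₂, Real.norm_eq_abs, abs_of_pos hW₁,
      abs_of_pos hW₂] at h'
    linarith
  obtain ⟨e, he⟩ := IsAlgClosed.exists_pow_nat_eq (-v₁ / ρ₁ ^ 5) (by norm_num : 0 < 5)
  have hρ₁' : (ρ₁ : ℂ) ^ 5 ≠ 0 := pow_ne_zero _ (ofReal_ne_zero.mpr hρ₁.ne')
  have he1 : ‖e‖ = 1 := by
    refine (pow_eq_one_iff_of_nonneg (norm_nonneg e) (by norm_num : 5 ≠ 0)).mp ?_
    rw [← norm_pow, he, norm_div, norm_neg, hv₁, norm_pow, norm_real, Real.norm_of_nonneg hρ₁.le,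
      div_self (pow_ne_zero _ hρ₁.ne')]
  rw [eq_div_iff hρ₁'] at he
  refine ⟨hW, ⟨e, mem_sphere_zero_iff_norm.mpr he1⟩, ?_, ?_⟩
  · show v₁ = -((ρ₁ : ℂ) * e) ^ 5
    linear_combination he
  · show v₂ = ((ρ₂ : ℂ) * e) ^ 5
    have hW₂' : (W₂ : ℂ) ≠ 0 := ofReal_ne_zero.mpr hW₂.ne'
    have hW' : (ρ₁ : ℂ) ^ 5 * W₁ = ρ₂ ^ 5 * W₂ := by exact_mod_cast hW
    refine mul_left_cancel₀ (mul_ne_zero hW₂' hρ₁') ?_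
    linear_combination (ρ₁ : ℂ) ^ 5 * h - v₁ * hW' - W₂ * ρ₂ ^ 5 * he

theorem coe_eq_and_weight_eq_of_shells {X : Finset (Euc 2)} {w : Euc 2 → ℝ} {r : ℕ → ℝ}
    (hsupp : X.image (fun x => ‖x‖) = {r 1, r 2}) (hr₁ : r 1 ≠ 0) (hr₂ : r 2 ≠ 0)
    (hc₁ : (shell X (r 1)).card = 5) (hc₂ : (shell X (r 2)).card = 5) (u : Circle) (c : ℝ)
    (hs₁ : ∀ x ∈ shell X (r 1), w x = c / r 1 ^ 5 ∧ toComplex x ^ 5 = -(r 1 * u) ^ 5)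
    (hs₂ : ∀ x ∈ shell X (r 2), w x = c / r 2 ^ 5 ∧ toComplex x ^ 5 = (r 2 * u) ^ 5) :
    (↑X : Set (Euc 2)) =
        {y | ∃ k ∈ Finset.Icc 1 2, ∃ j ∈ Finset.Icc 1 5, y = planeRotation u (bajnokPt (r k) k j)} ∧
      ∀ k ∈ Finset.Icc 1 2, ∀ j ∈ Finset.Icc 1 5,
        w (planeRotation u (bajnokPt (r k) k j)) = c / r k ^ 5 := by
  have hB₁ := coe_eq_setOf_planeRotation_bajnokPt hc₁ hr₁ u 1 fun x hx => by rw [(hs₁ x hx).2]; ring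
  have hB₂ := coe_eq_setOf_planeRotation_bajnokPt hc₂ hr₂ u 2 fun x hx => by rw [(hs₂ x hx).2]; ring
  have hIcc : Finset.Icc 1 2 = {1, 2} := rfl
  refine ⟨?_, ?_⟩
  · rw [coe_eq_shell_union_shell hsupp, hB₁, hB₂, hIcc]
    ext y
    simp
  · simp only [hIcc, Finset.mem_insert, Finset.mem_singleton, forall_eq_or_imp, forall_eq]
    exact ⟨fun j hj => (hs₁ _ (hB₁ ▸ ⟨j, hj, rfl⟩ : _ ∈ (shell X (r 1) : Set (Euc 2)))).1,
      fun j hj => (hs₂ _ (hB₂ ▸ ⟨j, hj, rfl⟩ : _ ∈ (shell X (r 2) : Set (Euc 2)))).1⟩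

theorem tight_euclidean_six_design_dim_two_unique_general
    (r : ℕ → ℝ) (hr1 : 0 < r 1) (hr2 : 0 < r 2) (hrne : r 1 ≠ r 2)
    (X : Finset (Euc 2)) (w : Euc 2 → ℝ)
    (hw : ∀ x ∈ X, 0 < w x)
    (hsupp : X.image (fun x => ‖x‖) = {r 1, r 2})
    (ht : IsTightDesign 2 3 X w) :
    ∃ (g : Euc 2 ≃ₗᵢ[ℝ] Euc 2) (c : ℝ), 0 < c ∧
      (↑X : Set (Euc 2)) =
        {y | ∃ k ∈ Finset.Icc 1 2, ∃ j ∈ Finset.Icc 1 5, y = g (bajnokPt (r k) k j)} ∧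
      ∀ k ∈ Finset.Icc 1 2, ∀ j ∈ Finset.Icc 1 5,
        w (g (bajnokPt (r k) k j)) = c / r k ^ 5 := by
  obtain ⟨⟨hd, hcard⟩, hdim⟩ := ht
  have hX : X.card = 10 := hcard.trans hdim
  have hsupp' := hsupp.trans (Finset.pair_comm _ _)
  have hsq : r 1 ^ 2 ≠ r 2 ^ 2 := fun h => hrne ((pow_left_inj₀ hr1.le hr2.le two_ne_zero).mp h)
  have hc₁ := card_shell_eq_five hd hX hsupp hr1 hr2 hrne hw
  have hc₂ := card_shell_eq_five hd hX hsupp' hr2 hr1 hrne.symm hw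
  obtain ⟨v₁, hv₁, hs₁⟩ := exists_weight_eq_and_toComplex_pow_eq_shell hd hsupp hr1 hsq hw hc₁
  obtain ⟨v₂, hv₂, hs₂⟩ := exists_weight_eq_and_toComplex_pow_eq_shell hd hsupp' hr2 hsq.symm hw hc₂
  set W₁ := ∑ x ∈ shell X (r 1), w x
  set W₂ := ∑ x ∈ shell X (r 2), w x
  have h5 := hd.sum_shell_mul_add_sum_shell_mul_eq_zero (by norm_num) hsupp hrne
    (fun x hx => (hs₁ x hx).2) (fun x hx => (hs₂ x hx).2)
  have hW₁ : 0 < W₁ := Finset.sum_pos (fun x hx => hw x (mem_shell.mp hx).1) (shell_nonempty hsupp)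
  have hW₂ : 0 < W₂ := Finset.sum_pos (fun x hx => hw x (mem_shell.mp hx).1) (shell_nonempty hsupp')
  obtain ⟨hW, u, hu₁, hu₂⟩ := exists_circle_of_mul_add_mul_eq_zero hr1 hW₁ hW₂ hv₁ hv₂ h5
  refine ⟨planeRotation u, r 1 ^ 5 * W₁ / 5, by positivity,
    coe_eq_and_weight_eq_of_shells hsupp hr1.ne' hr2.ne' hc₁ hc₂ u _ ?_ ?_⟩
  · intro x hx
    rw [(hs₁ x hx).1, (hs₁ x hx).2, hu₁]
    exact ⟨by field_simp, rfl⟩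
  · intro x hx
    rw [(hs₂ x hx).1, (hs₂ x hx).2, hu₂, hW]
    exact ⟨by field_simp, rfl⟩

/-- Every tight Euclidean 6-design `(X, w)` in `ℝ²` supported by two
concentric spheres of distinct positive radii `r 1 ≠ r 2` coincides, after applying a
suitable orthogonal transformation of `ℝ²`, with Bajnok's configuration
`{b_{kj} : 1 ≤ j ≤ 5, k = 1, 2}`, and its weight satisfies `w(b_{kj}) = c / r_k ^ 5`
for some constant `c > 0`. -/
theorem tight_euclidean_six_design_dim_two_unique
    (r : ℕ → ℝ) (hr1 : 0 < r 1) (hr2 : 0 < r 2) (hrne : r 1 ≠ r 2)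
    (X : Finset (Euc 2)) (w : Euc 2 → ℝ)
    (hne : X.Nonempty) (hw : ∀ x ∈ X, 0 < w x)
    (hsupp : X.image (fun x => ‖x‖) = {r 1, r 2})
    (ht : IsTightDesign 2 3 X w) :
    ∃ (g : Euc 2 ≃ₗᵢ[ℝ] Euc 2) (c : ℝ), 0 < c ∧
      (↑X : Set (Euc 2)) =
        {y | ∃ k ∈ Finset.Icc 1 2, ∃ j ∈ Finset.Icc 1 5, y = g (bajnokPt (r k) k j)} ∧
      ∀ k ∈ Finset.Icc 1 2, ∀ j ∈ Finset.Icc 1 5,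
        w (g (bajnokPt (r k) k j)) = c / r k ^ 5 :=
  tight_euclidean_six_design_dim_two_unique_general r hr1 hr2 hrne X w hw hsupp ht
end
end

section
/- If (X, w) is a Euclidean 2e-design in ℝⁿ supported by the union S of p concentric spheres, then |X| ≥ dim Pol_e(S). -/
open MeasureTheory Metric Finset
open scoped Classical RealInnerProductSpace

noncomputable section

/-! If `p` has degree at most `e` and vanishes on `X`, testing the design against `p²` gives a
sum of nonnegative terms, with the positive weights `w(Xᵢ)`, equal to `0`; so the average of `p²`
over every sphere `Sᵢ` vanishes. The `(n-1)`-dimensional Hausdorff measure of a sphere is finite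
and charges every nonempty relatively open subset, so the continuous function `p²` vanishes on
`S`. Hence restriction `Pol_e(S) → ℝ^X` is injective.

Both measure facts come from the graphs `x ↦ (x, ±√(r² - ‖x‖²))` over balls of `ℝⁿ⁻¹`:
finitely many of them, each Lipschitz, cover the sphere, and deleting a suitable coordinate,
which is 1-Lipschitz, maps any open piece of the sphere onto a set with nonempty interior. -/

open scoped NNReal ENNReal

theorem Submodule.finrank_le_card_of_forall_eq_zero {K α : Type*} [Field K] {S : Set α}
    (P : Submodule K (S → K)) (T : Finset α) (hTS : ↑T ⊆ S)
    (h : ∀ f ∈ P, (∀ x (hx : x ∈ T), f ⟨x, hTS hx⟩ = 0) → f = 0) :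
    Module.finrank K P ≤ T.card := by
  let restrict : P →ₗ[K] (T → K) := (LinearMap.funLeft K K (Set.inclusion hTS)) ∘ₗ P.subtype
  have hinj : Function.Injective restrict := by
    rw [← LinearMap.ker_eq_bot, LinearMap.ker_eq_bot']
    intro f hf
    exact Subtype.ext (h f f.2 fun x hx => congrFun hf ⟨x, hx⟩)
  simpa using LinearMap.finrank_le_finrank_of_injective hinj

theorem eqOn_zero_of_setAverage_eq_zero {α : Type*} [TopologicalSpace α] [MeasurableSpace α]
    [OpensMeasurableSpace α] {μ : Measure α} {s : Set α} {f : α → ℝ} (hs : MeasurableSet s)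
    (hμs : μ s ≠ ∞) (hpos : ∀ V, IsOpen V → (V ∩ s).Nonempty → 0 < μ (V ∩ s))
    (hf : Continuous f) (hf0 : 0 ≤ f) (hfi : IntegrableOn f s μ) (h : ⨍ x in s, f x ∂μ = 0) :
    Set.EqOn f 0 s := by
  intro y hy
  by_contra hfy
  have hμs0 : μ s ≠ 0 := by simpa using (hpos Set.univ isOpen_univ ⟨y, Set.mem_univ y, hy⟩).ne'
  have hint : ∫ x in s, f x ∂μ = 0 := by
    rw [setAverage_eq, smul_eq_zero] at h
    exact h.resolve_left (inv_ne_zero (ENNReal.toReal_ne_zero.2 ⟨hμs0, hμs⟩))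
  have hae : f =ᵐ[μ.restrict s] 0 := (integral_eq_zero_iff_of_nonneg hf0 hfi).1 hint
  have hnull : μ ({x | f x ≠ 0} ∩ s) = 0 := by
    rw [← Measure.restrict_apply' hs]
    exact ae_iff.1 hae
  exact (hpos _ (isOpen_ne_fun hf continuous_const) ⟨y, hfy, hy⟩).ne' hnull

section Coordinates

variable {m : ℕ}

def eucProj (i : Fin (m + 1)) (x : Euc (m + 1)) : Euc m :=
  WithLp.toLp 2 (i.removeNth x.ofLp)

def eucIns (i : Fin (m + 1)) (a : ℝ) (x : Euc m) : Euc (m + 1) :=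
  WithLp.toLp 2 (i.insertNth a x.ofLp)

@[simp] lemma eucProj_eucIns (i : Fin (m + 1)) (a : ℝ) (x : Euc m) :
    eucProj i (eucIns i a x) = x := by
  simp [eucProj, eucIns]

@[simp] lemma eucIns_eucProj (i : Fin (m + 1)) (x : Euc (m + 1)) :
    eucIns i (x i) (eucProj i x) = x := by
  simp [eucProj, eucIns]

lemma dist_eucIns_sq (i : Fin (m + 1)) (a b : ℝ) (x y : Euc m) :
    dist (eucIns i a x) (eucIns i b y) ^ 2 = (a - b) ^ 2 + dist x y ^ 2 := by
  simp [EuclideanSpace.dist_sq_eq, Fin.sum_univ_succAbove _ i, eucIns, Real.dist_eq, sq_abs]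

lemma norm_eucIns_sq (i : Fin (m + 1)) (a : ℝ) (x : Euc m) :
    ‖eucIns i a x‖ ^ 2 = a ^ 2 + ‖x‖ ^ 2 := by
  simp [EuclideanSpace.real_norm_sq_eq, Fin.sum_univ_succAbove _ i, eucIns]

lemma norm_eucProj_sq (i : Fin (m + 1)) (x : Euc (m + 1)) :
    ‖eucProj i x‖ ^ 2 = ‖x‖ ^ 2 - x i ^ 2 := by
  have h := norm_eucIns_sq i (x i) (eucProj i x)
  rw [eucIns_eucProj] at h
  linarith

lemma lipschitzWith_eucProj (i : Fin (m + 1)) : LipschitzWith 1 (eucProj (m := m) i) := by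
  refine LipschitzWith.of_dist_le_mul fun x y => ?_
  rw [NNReal.coe_one, one_mul, ← sq_le_sq₀ dist_nonneg dist_nonneg]
  conv_rhs => rw [← eucIns_eucProj i x, ← eucIns_eucProj i y, dist_eucIns_sq]
  exact le_add_of_nonneg_left (sq_nonneg _)

lemma dist_eucIns_le (i : Fin (m + 1)) (a b : ℝ) (x y : Euc m) :
    dist (eucIns i a x) (eucIns i b y) ≤ |a - b| + dist x y := by
  rw [← sq_le_sq₀ dist_nonneg (by positivity), dist_eucIns_sq, add_sq, sq_abs]
  nlinarith [abs_nonneg (a - b), dist_nonneg (x := x) (y := y)]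

lemma lipschitzOnWith_eucIns_graph {f : Euc m → ℝ} {K : ℝ≥0} {D : Set (Euc m)}
    (hf : LipschitzOnWith K f D) (i : Fin (m + 1)) :
    LipschitzOnWith (K + 1) (fun x => eucIns i (f x) x) D := by
  refine LipschitzOnWith.of_dist_le_mul fun x hx y hy => ?_
  calc dist (eucIns i (f x) x) (eucIns i (f y) y) ≤ |f x - f y| + dist x y :=
        dist_eucIns_le i _ _ x y
    _ ≤ K * dist x y + dist x y := by
        gcongr; rw [← Real.dist_eq]; exact hf.dist_le_mul x hx y hy
    _ = (K + 1 : ℝ≥0) * dist x y := by push_cast; ring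

lemma continuous_eucIns_graph {f : Euc m → ℝ} (hf : Continuous f) (i : Fin (m + 1)) :
    Continuous fun x => eucIns i (f x) x :=
  (PiLp.continuous_toLp 2 _).comp (hf.finInsertNth i (PiLp.continuous_ofLp 2 _))

end Coordinates

section SphereChart

variable {m : ℕ}

def sphereChart (r s : ℝ) (i : Fin (m + 1)) (x : Euc m) : Euc (m + 1) :=
  eucIns i (s * √(r ^ 2 - ‖x‖ ^ 2)) x

lemma norm_sphereChart {r s : ℝ} (hs : s ^ 2 = 1) (i : Fin (m + 1)) {x : Euc m}
    (hx : ‖x‖ ≤ r) : ‖sphereChart r s i x‖ = r := by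
  have hr : 0 ≤ r := (norm_nonneg x).trans hx
  rw [← sq_eq_sq₀ (norm_nonneg _) hr, sphereChart, norm_eucIns_sq, mul_pow, hs, one_mul,
    Real.sq_sqrt (by nlinarith [norm_nonneg x])]
  ring

lemma sphereChart_eucProj {r s : ℝ} {i : Fin (m + 1)} {x : Euc (m + 1)} (hx : ‖x‖ = r)
    (hs : s * |x i| = x i) : sphereChart r s i (eucProj i x) = x := by
  rw [sphereChart, norm_eucProj_sq, hx, sub_sub_cancel, Real.sqrt_sq_eq_abs, hs, eucIns_eucProj]

lemma continuous_sphereChart (r s : ℝ) (i : Fin (m + 1)) :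
    Continuous (sphereChart (m := m) r s i) :=
  continuous_eucIns_graph
    (continuous_const.mul (continuous_const.sub (continuous_norm.pow 2)).sqrt) i

lemma exists_lipschitzOnWith_sphereChart {r ρ : ℝ} (hρ : ρ < r) (s : ℝ) (i : Fin (m + 1)) :
    ∃ K, LipschitzOnWith K (sphereChart r s i) (closedBall (0 : Euc m) ρ) := by
  have hsmooth : ContDiffOn ℝ 1 (fun x : Euc m => s * √(r ^ 2 - ‖x‖ ^ 2)) (closedBall 0 ρ) := by
    refine contDiffOn_const.mul ((contDiffOn_const.sub (contDiff_norm_sq ℝ).contDiffOn).sqrt ?_)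
    intro x hx
    have hx : ‖x‖ ≤ ρ := mem_closedBall_zero_iff.1 hx
    nlinarith [norm_nonneg x]
  obtain ⟨K, hK⟩ := hsmooth.exists_lipschitzOnWith one_ne_zero (convex_closedBall _ _)
    (isCompact_closedBall _ _)
  exact ⟨K + 1, lipschitzOnWith_eucIns_graph hK i⟩

end SphereChart

section SphereMeasure

variable {m : ℕ}

instance isAddHaarMeasure_hausdorffMeasure_euc :
    (μH[(m : ℝ)] : Measure (Euc m)).IsAddHaarMeasure := by
  simpa [finrank_euclideanSpace_fin] using
    isAddHaarMeasure_hausdorffMeasure (E := Euc m)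

lemma exists_norm_sq_le_mul_sq (x : Euc (m + 1)) : ∃ i, ‖x‖ ^ 2 ≤ (m + 1) * x i ^ 2 := by
  obtain ⟨i, -, hi⟩ := exists_max_image univ (fun j => x j ^ 2) univ_nonempty
  refine ⟨i, ?_⟩
  rw [EuclideanSpace.real_norm_sq_eq]
  simpa using sum_le_card_nsmul univ (fun j => x j ^ 2) (x i ^ 2) hi

lemma sphere_subset_iUnion_sphereChart (r : ℝ) :
    sphere (0 : Euc (m + 1)) r ⊆
      ⋃ p : Fin (m + 1) × SignType,
        sphereChart r p.2 p.1 '' closedBall 0 √(r ^ 2 - r ^ 2 / (m + 1)) := by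
  intro x hx
  rw [mem_sphere_zero_iff_norm] at hx
  obtain ⟨i, hi⟩ := exists_norm_sq_le_mul_sq x
  refine Set.mem_iUnion.2 ⟨(i, SignType.sign (x i)), eucProj i x, ?_,
    sphereChart_eucProj hx (sign_mul_abs _)⟩
  refine mem_closedBall_zero_iff.2 (Real.le_sqrt_of_sq_le ?_)
  rw [norm_eucProj_sq, hx]
  rw [hx] at hi
  have : r ^ 2 / (m + 1) ≤ x i ^ 2 := by rw [div_le_iff₀ (by positivity)]; linarith
  linarith

lemma hausdorffMeasure_sphere_lt_top {r : ℝ} (hr : 0 < r) :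
    μH[(m : ℝ)] (sphere (0 : Euc (m + 1)) r) < ∞ := by
  have hρ : √(r ^ 2 - r ^ 2 / (m + 1)) < r := by
    rw [Real.sqrt_lt' hr]
    have : 0 < r ^ 2 / (m + 1) := by positivity
    linarith
  refine (measure_mono (sphere_subset_iUnion_sphereChart r)).trans_lt
    ((measure_iUnion_le _).trans_lt ?_)
  rw [tsum_fintype]
  refine ENNReal.sum_lt_top.2 fun p _ => ?_
  obtain ⟨K, hK⟩ := exists_lipschitzOnWith_sphereChart hρ p.2 p.1
  exact (hK.hausdorffMeasure_image_le (Nat.cast_nonneg m)).trans_lt <|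
    ENNReal.mul_lt_top (ENNReal.rpow_lt_top_of_nonneg (Nat.cast_nonneg m) ENNReal.coe_ne_top)
      (isCompact_closedBall _ _).measure_lt_top

lemma hausdorffMeasure_inter_sphere_pos {r : ℝ} (hr : 0 < r) {V : Set (Euc (m + 1))}
    (hV : IsOpen V) (hne : (V ∩ sphere (0 : Euc (m + 1)) r).Nonempty) :
    0 < μH[(m : ℝ)] (V ∩ sphere (0 : Euc (m + 1)) r) := by
  obtain ⟨y, hyV, hy⟩ := hne
  rw [mem_sphere_zero_iff_norm] at hy
  obtain ⟨i, hi⟩ : ∃ i, y i ≠ 0 := by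
    by_contra! h
    have : y = 0 := by ext j; exact h j
    rw [this, norm_zero] at hy
    exact hr.ne hy
  obtain ⟨s, hs⟩ : ∃ s : ℝ, s * |y i| = y i := ⟨_, sign_mul_abs _⟩
  have hs2 : s ^ 2 = 1 := by
    have h := congrArg (· ^ 2) hs
    simp only [mul_pow, sq_abs] at h
    exact (mul_eq_right₀ (pow_ne_zero 2 hi)).1 h
  set W := ball (0 : Euc m) r ∩ sphereChart r s i ⁻¹' V
  have hW_open : IsOpen W := isOpen_ball.inter (hV.preimage (continuous_sphereChart r s i))
  have hyW : eucProj i y ∈ W := by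
    refine ⟨?_, by rwa [Set.mem_preimage, sphereChart_eucProj hy hs]⟩
    rw [mem_ball_zero_iff, ← sq_lt_sq₀ (norm_nonneg _) hr.le, norm_eucProj_sq, hy]
    have := pow_pos (abs_pos.2 hi) 2
    rw [sq_abs] at this
    linarith
  have hW_sub : W ⊆ eucProj i '' (V ∩ sphere 0 r) := fun x hx =>
    ⟨sphereChart r s i x,
      ⟨hx.2, mem_sphere_zero_iff_norm.2 (norm_sphereChart hs2 i (mem_ball_zero_iff.1 hx.1).le)⟩,
      eucProj_eucIns _ _ _⟩
  calc 0 < μH[(m : ℝ)] W := hW_open.measure_pos _ ⟨_, hyW⟩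
    _ ≤ μH[(m : ℝ)] (eucProj i '' (V ∩ sphere 0 r)) := measure_mono hW_sub
    _ ≤ μH[(m : ℝ)] (V ∩ sphere 0 r) := by
        simpa using (lipschitzWith_eucProj i).hausdorffMeasure_image_le (Nat.cast_nonneg m) _

end SphereMeasure

lemma sphAvg_nonneg {n : ℕ} (r : ℝ) {f : Euc n → ℝ} (hf : 0 ≤ f) : 0 ≤ sphAvg n r f := by
  unfold sphAvg
  split_ifs
  · exact hf 0
  · rw [setAverage_eq]
    exact smul_nonneg (by positivity) (integral_nonneg hf)

lemma eqOn_zero_of_sphAvg_eq_zero {n : ℕ} {r : ℝ} {f : Euc n → ℝ} (hf : Continuous f)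
    (hf0 : 0 ≤ f) (h : sphAvg n r f = 0) : Set.EqOn f 0 (sphere 0 r) := by
  intro y hy
  rw [mem_sphere_zero_iff_norm] at hy
  unfold sphAvg at h
  split_ifs at h with hr
  · rwa [norm_eq_zero.1 (hy.trans hr)]
  have hr : 0 < r := (hy ▸ norm_nonneg y).lt_of_ne' hr
  cases n with
  | zero =>
    rw [Subsingleton.elim y 0, norm_zero] at hy
    exact absurd hy hr.ne
  | succ m =>
    have hdim : ((m + 1 : ℕ) : ℝ) - 1 = m := by push_cast; ring
    rw [hdim] at h
    have hmeas : MeasurableSet (sphere (0 : Euc (m + 1)) r) := isClosed_sphere.measurableSet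
    have hfin := (hausdorffMeasure_sphere_lt_top (m := m) hr).ne
    have hint := hf.continuousOn.integrableOn_of_subset_isCompact (isCompact_sphere 0 r) hmeas
      subset_rfl hfin
    exact eqOn_zero_of_setAverage_eq_zero hmeas hfin
      (fun V hV hne => hausdorffMeasure_inter_sphere_pos hr hV hne) hf hf0 hint h
      (mem_sphere_zero_iff_norm.2 hy)

lemma continuous_evalPt {n : ℕ} (p : MvPolynomial (Fin n) ℝ) :
    Continuous fun x : Euc n => evalPt x p :=
  (MvPolynomial.continuous_eval p).comp (PiLp.continuous_ofLp 2 _)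

lemma evalPt_mul_self {n : ℕ} (x : Euc n) (p : MvPolynomial (Fin n) ℝ) :
    evalPt x (p * p) = evalPt x p * evalPt x p :=
  map_mul _ p p

lemma coe_subset_suppSpheres (n : ℕ) (X : Finset (Euc n)) : ↑X ⊆ suppSpheres n X :=
  fun _ hx => Set.mem_biUnion (mem_image_of_mem _ hx) (mem_sphere_zero_iff_norm.2 rfl)

theorem IsEuclideanDesign.eval_eq_zero_of_eval_eq_zero {n e : ℕ} {X : Finset (Euc n)}
    {w : Euc n → ℝ} (hd : IsEuclideanDesign n (2 * e) X w) (hw : ∀ x ∈ X, 0 < w x)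
    {p : MvPolynomial (Fin n) ℝ} (hp : p.totalDegree ≤ e) (hX : ∀ x ∈ X, evalPt x p = 0) :
    ∀ y ∈ suppSpheres n X, evalPt y p = 0 := by
  have hsq_nonneg : 0 ≤ fun y : Euc n => evalPt y (p * p) := fun y => by
    simp only [evalPt_mul_self]; exact mul_self_nonneg _
  have hweight : ∀ r ∈ X.image (‖·‖), 0 < ∑ x ∈ X.filter (‖·‖ = r), w x := by
    intro r hr
    obtain ⟨x, hx, rfl⟩ := mem_image.1 hr
    exact sum_pos (fun z hz => hw z (mem_filter.1 hz).1) ⟨x, mem_filter.2 ⟨hx, rfl⟩⟩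
  have hsum : ∑ r ∈ X.image (‖·‖),
      (∑ x ∈ X.filter (‖·‖ = r), w x) * sphAvg n r (fun y => evalPt y (p * p)) = 0 := by
    rw [hd (p * p) ((MvPolynomial.totalDegree_mul p p).trans (by omega))]
    exact sum_eq_zero fun x hx => by rw [evalPt_mul_self, hX x hx, mul_zero, mul_zero]
  intro y hy
  obtain ⟨r, hr, hyr⟩ := Set.mem_iUnion₂.1 hy
  have havg : sphAvg n r (fun y => evalPt y (p * p)) = 0 := by
    have hterm := (sum_eq_zero_iff_of_nonneg fun r hr =>
      mul_nonneg (hweight r hr).le (sphAvg_nonneg r hsq_nonneg)).1 hsum r hr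
    exact (mul_eq_zero.1 hterm).resolve_left (hweight r hr).ne'
  simpa [evalPt_mul_self] using
    eqOn_zero_of_sphAvg_eq_zero (continuous_evalPt _) hsq_nonneg havg hyr

theorem card_ge_dim_polOn_of_euclidean_design_general (n e : ℕ)
    (X : Finset (Euc n)) (w : Euc n → ℝ)
    (hw : ∀ x ∈ X, 0 < w x)
    (hd : IsEuclideanDesign n (2 * e) X w) :
    dimPolOn n e (suppSpheres n X) ≤ X.card := by
  refine Submodule.finrank_le_card_of_forall_eq_zero _ X (coe_subset_suppSpheres n X) ?_
  rintro _ ⟨p, hp, rfl⟩ hpX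
  funext y
  exact hd.eval_eq_zero_of_eval_eq_zero hw ((MvPolynomial.mem_restrictTotalDegree _ _ _).1 hp)
    (fun x hx => hpX x hx) y y.2

/-- Fisher-type inequality: if `(X, w)` is a Euclidean `2e`-design in `ℝⁿ`
supported by the union `S` of its concentric spheres, then `|X| ≥ dim Pol_e(S)`. -/
theorem card_ge_dim_polOn_of_euclidean_design (n e : ℕ)
    (X : Finset (Euc n)) (w : Euc n → ℝ)
    (hne : X.Nonempty) (hw : ∀ x ∈ X, 0 < w x)
    (hd : IsEuclideanDesign n (2 * e) X w) :
    dimPolOn n e (suppSpheres n X) ≤ X.card :=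
  card_ge_dim_polOn_of_euclidean_design_general n e X w hw hd

end
end

section
/- Let S = S_1 ∪ … ∪ S_p be a union of p concentric spheres in ℝⁿ centered at the origin with distinct radii r_1,…,r_p ≥ 0, let ε_S = 1 if 0 ∈ S and ε_S = 0 otherwise, and let Pol_e(S) be the space of restrictions to S of polynomials of degree at most e. (a) If p ≤ ⌊(e+ε_S)/2⌋, then dim Pol_e(S) = ε_S + Σ_{i=0}^{2(p−ε_S)−1} C(n+e−i−1, n−1), and this is strictly less than C(n+e, e). (b) If p ≥ ⌊(e+ε_S)/2⌋ + 1, then dim Pol_e(S) = C(n+e, e). -/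
open MeasureTheory Metric Finset
open scoped Classical RealInnerProductSpace

noncomputable section

/-!
A polynomial vanishing on the sphere of radius `r > 0` is divisible by `|x|² - r²`: the
remainder of the division by this quadratic, monic in `x₀`, is linear in `x₀` and vanishes at
both roots `x₀ = ±√(r² - |y|²)` for every `y` in an open ball. The factors for distinct radii
are coprime, so the polynomials of degree `≤ e` vanishing on `S` are exactly the
`G * q` with `G = ∏_{rᵢ ≠ 0} (|x|² - rᵢ²)` of degree `2k`, `deg q ≤ e - 2k`, and `q(0) = 0`
when `0 ∈ S`. Rank–nullity gives `dim Pol_e(S) = C(n+e, e) - C(n+e-2k, e-2k) + ε_S` when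
`2k ≤ e` and `dim Pol_e(S) = C(n+e, e)` otherwise; Pascal's rule turns the difference of
binomials into the sum of the statement.
-/

namespace MvPolynomial

theorem eq_zero_of_eval_eq_zero_on_open {σ : Type*} [Fintype σ] {p : MvPolynomial σ ℝ}
    {U : Set (σ → ℝ)} (hU : IsOpen U) (hne : U.Nonempty) (h : ∀ x ∈ U, eval x p = 0) :
    p = 0 := by
  obtain ⟨x, hx⟩ := hne
  obtain ⟨δ, hδ, hball⟩ := Metric.isOpen_iff.mp hU x hx
  refine funext_set (fun i => ball (x i) δ) (fun i => ?_) fun y hy => ?_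
  · rw [Real.ball_eq_Ioo]; exact Set.Ioo_infinite (by linarith)
  · rw [map_zero]; exact h y (hball (by rwa [ball_pi x hδ]))

theorem totalDegree_finsetProd_of_isDomain {R σ ι : Type*} [CommRing R] [IsDomain R]
    (s : Finset ι) {f : ι → MvPolynomial σ R} (hf : ∀ i ∈ s, f i ≠ 0) :
    (∏ i ∈ s, f i).totalDegree = ∑ i ∈ s, (f i).totalDegree := by
  induction s using Finset.cons_induction with
  | empty => simp
  | cons a s ha ih =>
    have hs : ∀ i ∈ s, f i ≠ 0 := fun i hi => hf i (mem_cons_of_mem hi)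
    rw [prod_cons, sum_cons, totalDegree_mul_of_isDomain (hf a (mem_cons_self a s))
      (prod_ne_zero_iff.mpr hs), ih hs]

theorem finrank_restrictTotalDegree (σ K : Type*) [Fintype σ] [Field K] (e : ℕ) :
    Module.finrank K (restrictTotalDegree σ K e) = (Fintype.card σ + e).choose e := by
  have hdeg : {d : σ →₀ ℕ | (d.sum fun _ k => k) ≤ e}
      = ↑((range (e + 1)).biUnion fun k => (univ : Finset σ).finsuppAntidiag k) := by
    ext d; simp [mem_finsuppAntidiag, Finsupp.sum_fintype]
  have hdisj : Set.PairwiseDisjoint (range (e + 1) : Set ℕ)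
      fun k => (univ : Finset σ).finsuppAntidiag k := by
    intro a _ b _ hab
    exact disjoint_left.mpr fun d ha hb =>
      hab ((mem_finsuppAntidiag.mp ha).1.symm.trans (mem_finsuppAntidiag.mp hb).1)
  rw [restrictTotalDegree, Module.finrank_eq_nat_card_basis (basisRestrictSupport K _), hdeg,
    Nat.card_coe_set_eq, Set.ncard_coe_finset, card_biUnion hdisj]
  simp only [card_finsuppAntidiag_nat_eq_multichoose, card_univ]
  rw [Nat.sum_range_multichoose, add_comm, Nat.choose_symm_add]

end MvPolynomial

theorem Nat.choose_sub_add_sum_range_choose {n e t : ℕ} (hn : n ≠ 0) (h : t ≤ e) :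
    (n + (e - t)).choose (e - t) + ∑ i ∈ range t, (n + e - i - 1).choose (n - 1)
      = (n + e).choose e := by
  induction t with
  | zero => simp
  | succ t ih =>
    obtain ⟨j, hj⟩ : ∃ j, e - t = j + 1 := ⟨e - t - 1, by omega⟩
    have hpascal :
        (n + j).choose j + (n + j).choose (n - 1) = (n + (j + 1)).choose (j + 1) := by
      rw [← Nat.choose_symm_of_eq_add (show n + j = (j + 1) + (n - 1) by omega),
        ← add_assoc, Nat.choose_succ_succ]
    rw [sum_range_succ, ← ih (by omega), hj, show e - (t + 1) = j by omega,
      show n + e - t - 1 = n + j by omega, ← hpascal]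
    ring

theorem Submodule.finrank_map_add_finrank_inf_ker {K V W : Type*} [DivisionRing K]
    [AddCommGroup V] [Module K V] [AddCommGroup W] [Module K W] (f : V →ₗ[K] W)
    (p : Submodule K V) [FiniteDimensional K p] :
    Module.finrank K (p.map f) + Module.finrank K ↥(p ⊓ LinearMap.ker f)
      = Module.finrank K p := by
  rw [← LinearMap.range_domRestrict, ← (f.domRestrict p).finrank_range_add_finrank_ker,
    LinearMap.ker_domRestrict, ← Submodule.map_comap_subtype,
    ← (Submodule.equivMapOfInjective _ p.injective_subtype _).finrank_eq]

section Spheres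

open MvPolynomial

variable {n : ℕ}

def spherePoly (n : ℕ) (r : ℝ) : MvPolynomial (Fin n) ℝ := ∑ i, X i ^ 2 - C (r ^ 2)

theorem eval_spherePoly (x : Fin n → ℝ) (r : ℝ) :
    eval x (spherePoly n r) = ∑ i, x i ^ 2 - r ^ 2 := by
  simp [spherePoly]

theorem evalPt_spherePoly (x : Euc n) (r : ℝ) :
    evalPt x (spherePoly n r) = ‖x‖ ^ 2 - r ^ 2 := by
  rw [evalPt, eval_spherePoly, EuclideanSpace.real_norm_sq_eq]

theorem totalDegree_spherePoly (hn : n ≠ 0) (r : ℝ) : (spherePoly n r).totalDegree = 2 := by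
  refine le_antisymm ?_ ?_
  · refine (totalDegree_sub _ _).trans (max_le ((totalDegree_finsetSum _ _).trans ?_) ?_)
    · exact Finset.sup_le fun i _ => (totalDegree_X_pow i 2).le
    · rw [totalDegree_C]; omega
  · have i : Fin n := ⟨0, Nat.pos_of_ne_zero hn⟩
    have hcoeff : coeff (Finsupp.single i 2) (spherePoly n r) = 1 := by
      simp only [spherePoly, coeff_sub, coeff_sum, coeff_X_pow, coeff_C]
      simp [Finsupp.single_left_inj two_ne_zero, eq_comm (a := (0 : Fin n →₀ ℕ))]
    simpa using le_totalDegree (s := Finsupp.single i 2) (by simp [hcoeff])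

theorem spherePoly_ne_zero (hn : n ≠ 0) (r : ℝ) : spherePoly n r ≠ 0 := fun h => by
  simpa [h] using totalDegree_spherePoly hn r

theorem isCoprime_spherePoly {r s : ℝ} (h : r ^ 2 ≠ s ^ 2) :
    IsCoprime (spherePoly n r) (spherePoly n s) := by
  have hc : s ^ 2 - r ^ 2 ≠ 0 := sub_ne_zero.mpr h.symm
  refine ⟨C (s ^ 2 - r ^ 2)⁻¹, -C (s ^ 2 - r ^ 2)⁻¹, ?_⟩
  rw [neg_mul, ← sub_eq_add_neg, ← mul_sub, spherePoly, spherePoly, sub_sub_sub_cancel_left,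
    ← map_sub, ← map_mul, inv_mul_cancel₀ hc, map_one]

theorem finSuccEquiv_spherePoly (m : ℕ) (r : ℝ) :
    finSuccEquiv ℝ m (spherePoly (m + 1) r)
      = Polynomial.X ^ 2 + Polynomial.C (spherePoly m r) := by
  have hC : finSuccEquiv ℝ m (C r) = Polynomial.C (C r) := (finSuccEquiv ℝ m).commutes r
  simp only [spherePoly, Fin.sum_univ_succ, map_sub, map_add, map_pow, map_sum,
    finSuccEquiv_X_zero, finSuccEquiv_X_succ, hC]
  ring

theorem spherePoly_dvd_of_eval_eq_zero {r : ℝ} (hn : n ≠ 0) (hr : r ≠ 0)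
    {f : MvPolynomial (Fin n) ℝ} (h : ∀ x, eval x (spherePoly n r) = 0 → eval x f = 0) :
    spherePoly n r ∣ f := by
  obtain ⟨m, rfl⟩ := Nat.exists_eq_succ_of_ne_zero hn
  set E := finSuccEquiv ℝ m
  set g : Polynomial (MvPolynomial (Fin m) ℝ) := Polynomial.X ^ 2 + Polynomial.C (spherePoly m r)
  have hg : g.Monic := Polynomial.monic_X_pow_add_C _ two_ne_zero
  have hEg : E (spherePoly (m + 1) r) = g := finSuccEquiv_spherePoly m r
  suffices hρ : E f %ₘ g = 0 by
    rw [← map_dvd_iff E, hEg]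
    exact (Polynomial.modByMonic_eq_zero_iff_dvd hg).mp hρ
  set ρ := E f %ₘ g with hρ_def
  have hρdeg : ρ.natDegree < 2 := by
    have hg1 : g ≠ 1 := fun h1 => by
      simpa [g, Polynomial.natDegree_X_pow_add_C] using congrArg Polynomial.natDegree h1
    simpa [g, Polynomial.natDegree_X_pow_add_C] using
      Polynomial.natDegree_modByMonic_lt (E f) hg hg1
  set U := {y : Fin m → ℝ | eval y (spherePoly m r) < 0}
  -- over a point `y` of the open ball `U`, `g` has the two roots `±√(r² - |y|²)`
  have hρU : ∀ y ∈ U, ρ.map (eval y) = 0 := by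
    intro y hy
    set t := √(-eval y (spherePoly m r))
    have ht : 0 < t := Real.sqrt_pos.mpr (neg_pos.mpr hy)
    have hroot : ∀ s, s ^ 2 = t ^ 2 → (ρ.map (eval y)).eval s = 0 := by
      intro s hs
      have hgs : (g.map (eval y)).eval s = 0 := by
        simp [g, hs, t, Real.sq_sqrt (neg_nonneg.mpr hy.le)]
      have hfs : ((E f).map (eval y)).eval s = 0 := by
        rw [← eval_eq_eval_mv_eval']
        exact h _ (by rw [eval_eq_eval_mv_eval', hEg, hgs])
      rw [hρ_def, Polynomial.modByMonic_eq_sub_mul_div, Polynomial.map_sub, Polynomial.map_mul,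
        Polynomial.eval_sub, Polynomial.eval_mul, hfs, hgs, zero_mul, sub_zero]
    refine Polynomial.eq_zero_of_natDegree_lt_card_of_eval_eq_zero' _ {t, -t} ?_ ?_
    · simp only [Finset.mem_insert, Finset.mem_singleton]
      rintro s (rfl | rfl)
      · exact hroot _ rfl
      · exact hroot _ (neg_sq t)
    · rw [Finset.card_pair (by linarith)]
      exact (Polynomial.natDegree_map_le).trans_lt hρdeg
  have hU : IsOpen U := isOpen_lt (continuous_eval _) continuous_const
  have hU0 : (0 : Fin m → ℝ) ∈ U := by
    simp [U, eval_spherePoly, sq_pos_of_ne_zero hr]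
  refine Polynomial.ext fun i => ?_
  rw [Polynomial.coeff_zero]
  refine eq_zero_of_eval_eq_zero_on_open hU ⟨0, hU0⟩ fun y hy => ?_
  rw [← Polynomial.coeff_map, hρU y hy, Polynomial.coeff_zero]

theorem mem_ker_polyRestrict {S : Set (Euc n)} {f : MvPolynomial (Fin n) ℝ} :
    f ∈ LinearMap.ker (polyRestrict n S) ↔ ∀ x ∈ S, evalPt x f = 0 := by
  simp [polyRestrict, funext_iff]

theorem dimPolOn_singleton (e : ℕ) (x : Euc n) : dimPolOn n e {x} = 1 := by
  have htop : PolOn n e {x} = ⊤ := by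
    refine eq_top_iff.mpr fun φ _ => ⟨MvPolynomial.C (φ ⟨x, rfl⟩), ?_, ?_⟩
    · simp [MvPolynomial.mem_restrictTotalDegree]
    · funext ⟨y, hy⟩
      obtain rfl := Set.mem_singleton_iff.mp hy
      simp [polyRestrict, evalPt]
  rw [dimPolOn, htop, finrank_top, Module.finrank_fintype_fun_eq_card, Fintype.card_unique]

theorem dimPolOn_empty (e : ℕ) : dimPolOn n e ∅ = 0 :=
  Module.finrank_zero_of_subsingleton

variable {T : Finset ℝ}

def sphereUnion (n : ℕ) (T : Finset ℝ) : Set (Euc n) := ⋃ s ∈ T, sphere (0 : Euc n) s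

def prodSpherePoly (n : ℕ) (T : Finset ℝ) : MvPolynomial (Fin n) ℝ :=
  ∏ s ∈ T.erase 0, spherePoly n s

theorem zero_mem_sphereUnion_iff : (0 : Euc n) ∈ sphereUnion n T ↔ (0 : ℝ) ∈ T := by
  simp [sphereUnion, eq_comm (a := (0 : ℝ))]

theorem prodSpherePoly_ne_zero (hn : n ≠ 0) (T : Finset ℝ) : prodSpherePoly n T ≠ 0 :=
  prod_ne_zero_iff.mpr fun s _ => spherePoly_ne_zero hn s

theorem totalDegree_prodSpherePoly (hn : n ≠ 0) (T : Finset ℝ) :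
    (prodSpherePoly n T).totalDegree = 2 * (T.erase 0).card := by
  rw [prodSpherePoly, totalDegree_finsetProd_of_isDomain _ fun s _ => spherePoly_ne_zero hn s]
  simp [totalDegree_spherePoly hn, mul_comm]

theorem evalPt_zero_prodSpherePoly_ne_zero : evalPt 0 (prodSpherePoly n T) ≠ 0 := by
  simp only [evalPt, prodSpherePoly, map_prod]
  refine prod_ne_zero_iff.mpr fun s hs => ?_
  rw [← evalPt, evalPt_spherePoly, norm_zero]
  simpa using (mem_erase.mp hs).1

theorem evalPt_prodSpherePoly_eq_zero {x : Euc n} (hx : x ∈ sphereUnion n T) (hx0 : x ≠ 0) :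
    evalPt x (prodSpherePoly n T) = 0 := by
  obtain ⟨s, hs, hxs⟩ := Set.mem_iUnion₂.mp hx
  have hs0 : s ≠ 0 := by rintro rfl; simp_all
  simp only [evalPt, prodSpherePoly, map_prod]
  refine prod_eq_zero (mem_erase.mpr ⟨hs0, hs⟩) ?_
  rw [← evalPt, evalPt_spherePoly, mem_sphere_zero_iff_norm.mp hxs, sub_self]

theorem prodSpherePoly_dvd (hn : n ≠ 0) (hT : ∀ s ∈ T, 0 ≤ s) {f : MvPolynomial (Fin n) ℝ}
    (hf : ∀ x ∈ sphereUnion n T, evalPt x f = 0) : prodSpherePoly n T ∣ f := by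
  refine prod_dvd_of_coprime (fun s hs t ht hst => isCoprime_spherePoly ?_) fun s hs => ?_
  · exact fun h =>
      hst ((sq_eq_sq₀ (hT s (mem_of_mem_erase hs)) (hT t (mem_of_mem_erase ht))).mp h)
  · refine spherePoly_dvd_of_eval_eq_zero hn (ne_of_mem_erase hs) fun x hx => ?_
    have hnorm : ‖WithLp.toLp 2 x‖ = s := by
      rw [← sq_eq_sq₀ (norm_nonneg _) (hT s (mem_of_mem_erase hs)), ← sub_eq_zero,
        ← evalPt_spherePoly]
      exact hx
    exact hf _
      (Set.mem_iUnion₂.mpr ⟨s, mem_of_mem_erase hs, mem_sphere_zero_iff_norm.mpr hnorm⟩)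

theorem vanishesOn_sphereUnion_iff (hn : n ≠ 0) (hT : ∀ s ∈ T, 0 ≤ s)
    {f : MvPolynomial (Fin n) ℝ} :
    (∀ x ∈ sphereUnion n T, evalPt x f = 0) ↔
      ∃ q, f = prodSpherePoly n T * q ∧ ∀ x ∈ sphereUnion n T ∩ {0}, evalPt x q = 0 := by
  have hmul (x : Euc n) (q : MvPolynomial (Fin n) ℝ) :
      evalPt x (prodSpherePoly n T * q) = evalPt x (prodSpherePoly n T) * evalPt x q :=
    map_mul _ _ _
  constructor
  · intro hf
    obtain ⟨q, rfl⟩ := prodSpherePoly_dvd hn hT hf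
    refine ⟨q, rfl, fun x ⟨hx, hx0⟩ => ?_⟩
    obtain rfl := Set.mem_singleton_iff.mp hx0
    have h0 := hf 0 hx
    rw [hmul] at h0
    exact (mul_eq_zero.mp h0).resolve_left evalPt_zero_prodSpherePoly_ne_zero
  · rintro ⟨q, rfl, hq⟩ x hx
    rw [hmul]
    by_cases hx0 : x = 0
    · rw [hq x ⟨hx, hx0⟩, mul_zero]
    · rw [evalPt_prodSpherePoly_eq_zero hx hx0, zero_mul]

theorem totalDegree_prodSpherePoly_mul_le_iff (hn : n ≠ 0) {q : MvPolynomial (Fin n) ℝ}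
    {e : ℕ} : (prodSpherePoly n T * q).totalDegree ≤ e ↔
      q = 0 ∨ 2 * (T.erase 0).card + q.totalDegree ≤ e := by
  rcases eq_or_ne q 0 with rfl | hq
  · simp
  · rw [totalDegree_mul_of_isDomain (prodSpherePoly_ne_zero hn T) hq,
      totalDegree_prodSpherePoly hn]
    simp [hq]

theorem restrictTotalDegree_inf_ker_sphereUnion (hn : n ≠ 0) (hT : ∀ s ∈ T, 0 ≤ s) {e : ℕ}
    (he : 2 * (T.erase 0).card ≤ e) :
    restrictTotalDegree (Fin n) ℝ e ⊓ LinearMap.ker (polyRestrict n (sphereUnion n T)) =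
      (restrictTotalDegree (Fin n) ℝ (e - 2 * (T.erase 0).card) ⊓
        LinearMap.ker (polyRestrict n (sphereUnion n T ∩ {0}))).map
          (LinearMap.mulLeft ℝ (prodSpherePoly n T)) := by
  ext f
  simp only [Submodule.mem_inf, Submodule.mem_map, mem_restrictTotalDegree, mem_ker_polyRestrict,
    LinearMap.mulLeft_apply, vanishesOn_sphereUnion_iff hn hT]
  constructor
  · rintro ⟨hdeg, q, rfl, hq⟩
    refine ⟨q, ⟨?_, hq⟩, rfl⟩
    rcases (totalDegree_prodSpherePoly_mul_le_iff hn).mp hdeg with rfl | hdeg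
    · simp
    · omega
  · rintro ⟨q, ⟨hdeg, hq⟩, rfl⟩
    exact ⟨(totalDegree_prodSpherePoly_mul_le_iff hn).mpr (Or.inr (by omega)), q, rfl, hq⟩

theorem restrictTotalDegree_inf_ker_sphereUnion_eq_bot (hn : n ≠ 0) (hT : ∀ s ∈ T, 0 ≤ s)
    {e : ℕ} (he : e < 2 * (T.erase 0).card) :
    restrictTotalDegree (Fin n) ℝ e ⊓ LinearMap.ker (polyRestrict n (sphereUnion n T)) = ⊥ := by
  refine (Submodule.eq_bot_iff _).mpr fun f ⟨hdeg, hf⟩ => ?_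
  obtain ⟨q, rfl, -⟩ := (vanishesOn_sphereUnion_iff hn hT).mp (mem_ker_polyRestrict.mp hf)
  rcases (totalDegree_prodSpherePoly_mul_le_iff hn).mp ((mem_restrictTotalDegree _ _ _).mp hdeg)
    with rfl | hdeg
  · exact mul_zero _
  · omega

theorem dimPolOn_sphereUnion_inter_zero (e : ℕ) :
    dimPolOn n e (sphereUnion n T ∩ {0}) = if (0 : ℝ) ∈ T then 1 else 0 := by
  split_ifs with h0
  · rw [Set.inter_singleton_of_mem (zero_mem_sphereUnion_iff.mpr h0), dimPolOn_singleton]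
  · rw [Set.inter_singleton_eq_empty.mpr (zero_mem_sphereUnion_iff.not.mpr h0), dimPolOn_empty]

theorem dimPolOn_sphereUnion_add_choose (hn : n ≠ 0) (hT : ∀ s ∈ T, 0 ≤ s) {e : ℕ}
    (he : 2 * (T.erase 0).card ≤ e) :
    dimPolOn n e (sphereUnion n T)
        + (n + (e - 2 * (T.erase 0).card)).choose (e - 2 * (T.erase 0).card)
      = (n + e).choose e + if (0 : ℝ) ∈ T then 1 else 0 := by
  have hS := Submodule.finrank_map_add_finrank_inf_ker (polyRestrict n (sphereUnion n T))
    (restrictTotalDegree (Fin n) ℝ e)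
  have h0 := Submodule.finrank_map_add_finrank_inf_ker (polyRestrict n (sphereUnion n T ∩ {0}))
    (restrictTotalDegree (Fin n) ℝ (e - 2 * (T.erase 0).card))
  rw [restrictTotalDegree_inf_ker_sphereUnion hn hT he,
    ← (Submodule.equivMapOfInjective (LinearMap.mulLeft ℝ (prodSpherePoly n T))
      (mul_right_injective₀ (prodSpherePoly_ne_zero hn T)) _).finrank_eq] at hS
  rw [← PolOn, ← dimPolOn, finrank_restrictTotalDegree, Fintype.card_fin] at hS h0
  rw [dimPolOn_sphereUnion_inter_zero] at h0
  omega

theorem dimPolOn_sphereUnion_of_lt (hn : n ≠ 0) (hT : ∀ s ∈ T, 0 ≤ s) {e : ℕ}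
    (he : e < 2 * (T.erase 0).card) : dimPolOn n e (sphereUnion n T) = (n + e).choose e := by
  have hS := Submodule.finrank_map_add_finrank_inf_ker (polyRestrict n (sphereUnion n T))
    (restrictTotalDegree (Fin n) ℝ e)
  rwa [restrictTotalDegree_inf_ker_sphereUnion_eq_bot hn hT he, finrank_bot, add_zero,
    finrank_restrictTotalDegree, Fintype.card_fin] at hS

end Spheres

/-- Let `S` be the union of `p` concentric spheres in `ℝⁿ` centered at
the origin with distinct radii `r₁, …, r_p ≥ 0`, and `ε_S = 1` iff `0 ∈ S`.
(a) If `p ≤ ⌊(e + ε_S)/2⌋`, then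
`dim Pol_e(S) = ε_S + ∑_{i=0}^{2(p-ε_S)-1} C(n+e-i-1, n-1) < C(n+e, e)`.
(b) If `p ≥ ⌊(e + ε_S)/2⌋ + 1`, then `dim Pol_e(S) = C(n+e, e)`. -/
theorem dim_polOn_concentric_spheres (n : ℕ) (hn : 1 ≤ n) (e p : ℕ)
    (r : Fin p → ℝ) (hr0 : ∀ i, 0 ≤ r i) (hrinj : Function.Injective r)
    (S : Set (Euc n)) (hS : S = ⋃ i, Metric.sphere (0 : Euc n) (r i))
    (ε : ℕ) (hε : ε = if (0 : Euc n) ∈ S then 1 else 0) :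
    (p ≤ (e + ε) / 2 →
      dimPolOn n e S
          = ε + ∑ i ∈ Finset.range (2 * (p - ε)), (n + e - i - 1).choose (n - 1) ∧
        dimPolOn n e S < (n + e).choose e) ∧
    ((e + ε) / 2 + 1 ≤ p → dimPolOn n e S = (n + e).choose e) := by
  set T := univ.image r
  have hn0 : n ≠ 0 := by omega
  have hT : ∀ s ∈ T, 0 ≤ s := by simpa [T] using hr0
  obtain rfl : S = sphereUnion n T := by simp [hS, sphereUnion, T]
  replace hε : ε = if (0 : ℝ) ∈ T then 1 else 0 :=
    hε.trans (if_congr zero_mem_sphereUnion_iff rfl rfl)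
  have hp : #(T.erase 0) + ε = p := by
    rw [hε]
    split_ifs with h0
    · rw [card_erase_add_one h0, card_image_of_injective _ hrinj, card_fin]
    · rw [erase_eq_of_notMem h0, card_image_of_injective _ hrinj, card_fin, add_zero]
  have hε1 : ε ≤ 1 := by rw [hε]; split_ifs <;> omega
  obtain ⟨k, hk⟩ : ∃ k, #(T.erase 0) = k := ⟨_, rfl⟩
  rw [hk] at hp
  refine ⟨fun hpe => ?_, fun hpe => ?_⟩
  · have hdim := dimPolOn_sphereUnion_add_choose hn0 hT (e := e) (by omega)
    have hsum := Nat.choose_sub_add_sum_range_choose hn0 (show 2 * k ≤ e by omega)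
    have hpos : ε < (n + (e - 2 * k)).choose (e - 2 * k) :=
      calc ε < e - 2 * k + 1 := by omega
        _ = (e - 2 * k + 1).choose (e - 2 * k) := (Nat.choose_succ_self_right _).symm
        _ ≤ _ := Nat.choose_le_choose _ (by omega)
    rw [hk, ← hε] at hdim
    rw [show 2 * (p - ε) = 2 * k by omega]
    omega
  · rcases lt_or_ge e (2 * k) with hlt | hle
    · exact dimPolOn_sphereUnion_of_lt hn0 hT (hk ▸ hlt)
    · have hdim := dimPolOn_sphereUnion_add_choose hn0 hT (hk ▸ hle)
      rw [hk, ← hε, show e - 2 * k = 0 by omega, Nat.choose_zero_right] at hdim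
      omega

end
end
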